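/- Let k ≥ 2 and α, μ > 0, and let Ψ be a k-uniform (α, μ)-constellation on n vertices. Then for every (k−2)-element set x ⊆ V(Ψ), the number of vertices z ∈ V(Ψ) \ V(R^Ψ_x) with degree greater than (n−2)/3 in the link graph H(Ψ_x) is at most (2μ/α)·n. -/

import Mathlib

/-! Every vertex `z ∉ V(R_x)` of degree above `(n - 2)/3` in the link graph of `x` has at most
`n - |V(R_x)| - 1 < n/3 - αn/2` neighbours outside `V(R_x)`, so more than `αn/2` of its link
edges cross between `V(R_x)` and its complement. A crossing edge has only one endpoint outside
`V(R_x)`, so double counting against the at most `μn²` crossing edges bounds the number of such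
vertices by `2μn/α`. -/

open Finset

structure Constellation (V : Type*) [DecidableEq V] where
  verts : Finset V
  edges : Finset (Finset V)
  W : Finset V → Finset V

namespace Constellation

variable {V : Type*} [DecidableEq V]

/-- The link constellation `Ψ_S`. -/
def link (Ψ : Constellation V) (S : Finset V) : Constellation V where
  verts := Ψ.verts \ S
  edges := (Ψ.edges.filter fun e => S ⊆ e).image (· \ S)
  W := fun x => Ψ.W (x ∪ S) \ S

/-- The induced subconstellation `Ψ[X]`. -/
def induce (Ψ : Constellation V) (X : Finset V) : Constellation V where
  verts := Ψ.verts ∩ X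
  edges := Ψ.edges.filter fun e => e ⊆ X
  W := fun x => Ψ.W x ∩ X

/-- `Ψ - X`. -/
def remove (Ψ : Constellation V) (X : Finset V) : Constellation V :=
  Ψ.induce (Ψ.verts \ X)

end Constellation

/-- `Ψ` is a `k`-uniform constellation. -/
def IsUniformConst {V : Type*} [DecidableEq V] (k : ℕ) (Ψ : Constellation V) : Prop :=
  ∀ e ∈ Ψ.edges, e ⊆ Ψ.verts ∧ e.card = k

/-- `ζ`-leftconnectability of a `(k-1)`-tuple (as a list) in a `k`-uniform constellation. -/
def LeftConn {V : Type*} [DecidableEq V] : ℕ → Constellation V → ℝ → List V → Prop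
  | 0, _, _, _ => False
  | 1, _, _, _ => False
  | 2, Ψ, _, xs => xs.length = 1 ∧ ∀ v ∈ xs, v ∈ Ψ.W ∅
  | (k + 3), Ψ, ζ, xs =>
      xs.length = k + 2 ∧
      ζ * (Ψ.verts.card : ℝ) ≤
        (({z : V | z ∈ Ψ.verts ∧ insert z xs.toFinset ∈ Ψ.edges ∧
            LeftConn (k + 2) (Ψ.link {z}) ζ xs.tail} : Set V).ncard : ℝ)

def RightConn {V : Type*} [DecidableEq V] (k : ℕ) (Ψ : Constellation V) (ζ : ℝ)
    (xs : List V) : Prop :=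
  LeftConn k Ψ ζ xs.reverse

def Conn {V : Type*} [DecidableEq V] (k : ℕ) (Ψ : Constellation V) (ζ : ℝ)
    (xs : List V) : Prop :=
  LeftConn k Ψ ζ xs ∧ RightConn k Ψ ζ xs

/-- A `ζ`-bridge. -/
def IsBridge {V : Type*} [DecidableEq V] (k : ℕ) (Ψ : Constellation V) (ζ : ℝ)
    (x : Fin k → V) : Prop :=
  Finset.image x Finset.univ ∈ Ψ.edges ∧
  RightConn k Ψ ζ (List.ofFn x).dropLast ∧
  LeftConn k Ψ ζ (List.ofFn x).tail

/-- number of edges of the link graph of `x` crossing between `V(R_x)` and its complement. -/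
def crossCount {V : Type*} [DecidableEq V] (Ψ : Constellation V) (x : Finset V) : ℕ :=
  ((Ψ.link x).edges.filter fun p => (p ∩ Ψ.W x).Nonempty ∧ (p \ Ψ.W x).Nonempty).card

/-- `Ψ` is an `(α, μ)`-constellation. -/
def IsAMConst {V : Type*} [DecidableEq V] (k : ℕ) (Ψ : Constellation V) (α μ : ℝ) : Prop :=
  IsUniformConst k Ψ ∧
  ∀ x : Finset V, x ⊆ Ψ.verts → x.card = k - 2 →
    ((5 / 9 + α) * (Ψ.verts.card : ℝ) ^ 2 / 2 ≤
        ((Ψ.edges.filter fun e => x ⊆ e).card : ℝ)) ∧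
    Ψ.W x ⊆ Ψ.verts ∧
    ((2 / 3 + α / 2) * (Ψ.verts.card : ℝ) ≤ ((Ψ.W x).card : ℝ)) ∧
    ((crossCount Ψ x : ℝ) ≤ μ * (Ψ.verts.card : ℝ) ^ 2)

/-- number of `y`-`z`-paths of length `ℓ` in `R_x`. -/
noncomputable def pathCount {V : Type*} [DecidableEq V] (Ψ : Constellation V) (x : Finset V)
    (y z : V) (ℓ : ℕ) : ℕ :=
  ({ l : List V | l.length = ℓ + 1 ∧ l.Nodup ∧ (∀ v ∈ l, v ∈ Ψ.W x) ∧
      l.head? = some y ∧ l.getLast? = some z ∧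
      l.Chain' (fun u v => ({u, v} : Finset V) ∈ (Ψ.link x).edges) } : Set (List V)).ncard

/-- `Ψ` is an `(α, β, ℓ, μ)`-constellation. -/
def IsConst {V : Type*} [DecidableEq V] (k : ℕ) (Ψ : Constellation V)
    (α β : ℝ) (ℓ : ℕ) (μ : ℝ) : Prop :=
  IsAMConst k Ψ α μ ∧
  ∀ x : Finset V, x ⊆ Ψ.verts → x.card = k - 2 →
    ∀ y ∈ Ψ.W x, ∀ z ∈ Ψ.W x, y ≠ z →
      β * (Ψ.verts.card : ℝ) ^ (ℓ - 1) ≤ (pathCount Ψ x y z ℓ : ℝ)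

/-- `x` is a walk (of `m` vertices) in the `k`-uniform hypergraph with edge set `E`. -/
def IsWalk {V : Type*} [DecidableEq V] (E : Finset (Finset V)) (k m : ℕ)
    (x : Fin m → V) : Prop :=
  ∀ i : ℕ, ∀ h : i + k ≤ m,
    Finset.image (fun j : Fin k => x ⟨i + j.1, by have := j.2; omega⟩) Finset.univ ∈ E

/-- `l` is a path in the `k`-uniform hypergraph with edge set `E`. -/
def IsPathList {V : Type*} [DecidableEq V] (E : Finset (Finset V)) (k : ℕ)
    (l : List V) : Prop :=
  l.Nodup ∧ ∀ i : ℕ, i + k ≤ l.length → ((l.drop i).take k).toFinset ∈ E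

theorem IsUniformConst.link {V : Type*} [DecidableEq V] {k : ℕ} {Ψ : Constellation V}
    (hΨ : IsUniformConst k Ψ) (S : Finset V) : IsUniformConst (k - #S) (Ψ.link S) := by
  intro p hp
  obtain ⟨e, he, rfl⟩ := mem_image.mp hp
  obtain ⟨he, hSe⟩ := mem_filter.mp he
  exact ⟨sdiff_subset_sdiff (hΨ e he).1 subset_rfl, by
    rw [card_sdiff_of_subset hSe, (hΨ e he).2]⟩

theorem IsUniformConst.subset_verts_and_card_eq_two_of_mem_link {V : Type*} [DecidableEq V]
    {k : ℕ} {Ψ : Constellation V} (hΨ : IsUniformConst k Ψ) (hk : 2 ≤ k) {x : Finset V}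
    (hxc : #x = k - 2) {p : Finset V} (hp : p ∈ (Ψ.link x).edges) : p ⊆ Ψ.verts ∧ #p = 2 :=
  have hp := hΨ.link x p hp
  ⟨hp.1.trans sdiff_subset, by omega⟩

section CrossingEdges

variable {V : Type*} [DecidableEq V] (E : Finset (Finset V)) (W : Finset V)

def crossingEdges : Finset (Finset V) :=
  E.filter fun p => (p ∩ W).Nonempty ∧ (p \ W).Nonempty

theorem crossCount_eq_card_crossingEdges (Ψ : Constellation V) (x : Finset V) :
    crossCount Ψ x = #(crossingEdges (Ψ.link x).edges (Ψ.W x)) := rfl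

variable {E W} {U : Finset V}

theorem card_sdiff_le_one_of_mem_crossingEdges {p : Finset V} (hp : p ∈ crossingEdges E W)
    (hp2 : #p = 2) : #(p \ W) ≤ 1 := by
  have hpW : 0 < #(p ∩ W) := card_pos.mpr (mem_filter.mp hp).2.1
  have := card_sdiff_add_card_inter p W
  omega

/-- In a graph on `U`, a vertex `z ∈ U \ W` has at most `#(U \ W) - 1` neighbours outside `W`;
all its other edges cross. -/
theorem card_filter_mem_add_one_le (hE : ∀ p ∈ E, p ⊆ U ∧ #p = 2) {z : V} (hz : z ∈ U \ W) :
    #{p ∈ E | z ∈ p} + 1 ≤ #{p ∈ crossingEdges E W | z ∈ p} + #(U \ W) := by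
  have hcover : {p ∈ E | z ∈ p} ⊆
      {p ∈ crossingEdges E W | z ∈ p} ∪ ((U \ W).erase z).image fun y => {z, y} := by
    intro p hp
    obtain ⟨hpE, hzp⟩ := mem_filter.mp hp
    by_cases hcross : (p ∩ W).Nonempty ∧ (p \ W).Nonempty
    · exact mem_union_left _ (mem_filter.mpr ⟨mem_filter.mpr ⟨hpE, hcross⟩, hzp⟩)
    have hpW : ¬(p ∩ W).Nonempty := fun h =>
      hcross ⟨h, z, mem_sdiff.mpr ⟨hzp, (mem_sdiff.mp hz).2⟩⟩
    obtain ⟨hpU, hp2⟩ := hE p hpE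
    obtain ⟨y, hy⟩ := card_eq_one.mp (by rw [card_erase_of_mem hzp, hp2] : #(p.erase z) = 1)
    have hyp : y ∈ p.erase z := hy ▸ mem_singleton_self y
    refine mem_union_right _ (mem_image.mpr ⟨y, ?_, by rw [← hy, insert_erase hzp]⟩)
    refine mem_erase.mpr ⟨ne_of_mem_erase hyp, mem_sdiff.mpr ⟨hpU (mem_of_mem_erase hyp), ?_⟩⟩
    exact fun hyW => hpW ⟨y, mem_inter.mpr ⟨mem_of_mem_erase hyp, hyW⟩⟩
  have := (card_le_card hcover).trans (card_union_le _ _)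
  have := card_image_le (s := (U \ W).erase z) (f := fun y => ({z, y} : Finset V))
  have := card_erase_of_mem hz
  have := card_pos.mpr ⟨z, hz⟩
  omega

theorem mul_card_le_card_filter_mem_crossingEdges (hE : ∀ p ∈ E, p ⊆ U ∧ #p = 2) (hWU : W ⊆ U)
    {α : ℝ} (hW : (2 / 3 + α / 2) * #U ≤ #W) {z : V} (hz : z ∈ U \ W)
    (hdeg : ((#U : ℝ) - 2) / 3 < #{p ∈ E | z ∈ p}) :
    α * #U / 2 ≤ #{p ∈ crossingEdges E W | z ∈ p} := by
  have hcompl : (#(U \ W) : ℝ) = #U - #W := by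
    rw [card_sdiff_of_subset hWU, Nat.cast_sub (card_le_card hWU)]
  have : (#{p ∈ E | z ∈ p} + 1 : ℝ) ≤ #{p ∈ crossingEdges E W | z ∈ p} + #(U \ W) := by
    exact_mod_cast card_filter_mem_add_one_le hE hz
  linarith

/-- Double counting: a crossing edge has a single endpoint outside `W`. -/
theorem card_mul_le_card_crossingEdges (hE : ∀ p ∈ E, #p = 2) {B : Finset V}
    (hBW : Disjoint B W) {d : ℝ} (hd : ∀ z ∈ B, d ≤ #{p ∈ crossingEdges E W | z ∈ p}) :
    #B * d ≤ #(crossingEdges E W) := by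
  have hendpoint : ∀ p ∈ crossingEdges E W, #(B.bipartiteBelow (· ∈ ·) p) ≤ (1 : ℝ) := by
    intro p hp
    have hsub : B.bipartiteBelow (· ∈ ·) p ⊆ p \ W := fun z hz =>
      mem_sdiff.mpr ⟨(mem_filter.mp hz).2, disjoint_left.mp hBW (mem_filter.mp hz).1⟩
    exact_mod_cast (card_le_card hsub).trans
      (card_sdiff_le_one_of_mem_crossingEdges hp (hE p (mem_filter.mp hp).1))
  simpa using card_nsmul_le_card_nsmul _ hd hendpoint

end CrossingEdges

theorem stmt10_general {V : Type*} [DecidableEq V] (k : ℕ) (hk : 2 ≤ k)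
    (α μ : ℝ) (hα : 0 < α)
    (Ψ : Constellation V) (h : IsAMConst k Ψ α μ)
    (x : Finset V) (hx : x ⊆ Ψ.verts) (hxc : x.card = k - 2) :
    (({z : V | z ∈ Ψ.verts ∧ z ∉ Ψ.W x ∧
        ((Ψ.verts.card : ℝ) - 2) / 3 <
          (((Ψ.link x).edges.filter fun p => z ∈ p).card : ℝ)} : Set V).ncard : ℝ) ≤
      2 * μ / α * (Ψ.verts.card : ℝ) := by
  obtain ⟨-, hWU, hW, hcross⟩ := h.2 x hx hxc
  have hE : ∀ p ∈ (Ψ.link x).edges, p ⊆ Ψ.verts ∧ #p = 2 := fun _ =>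
    h.1.subset_verts_and_card_eq_two_of_mem_link hk hxc
  set n := #Ψ.verts
  set B := {z ∈ Ψ.verts | z ∉ Ψ.W x ∧ ((n : ℝ) - 2) / 3 < #{p ∈ (Ψ.link x).edges | z ∈ p}}
  have hB : {z : V | z ∈ Ψ.verts ∧ z ∉ Ψ.W x ∧
      ((n : ℝ) - 2) / 3 < #{p ∈ (Ψ.link x).edges | z ∈ p}} = ↑B := by
    ext z; simp [B]
  have hdouble : #B * (α * n / 2) ≤ μ * n ^ 2 := by
    refine (card_mul_le_card_crossingEdges (fun p hp => (hE p hp).2) ?_ fun z hz => ?_).trans hcross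
    · exact disjoint_left.mpr fun z hz => (mem_filter.mp hz).2.1
    · obtain ⟨hzU, hzW, hdeg⟩ := mem_filter.mp hz
      exact mul_card_le_card_filter_mem_crossingEdges hE hWU hW (mem_sdiff.mpr ⟨hzU, hzW⟩) hdeg
  have hBn : (#B : ℝ) ≤ n := by exact_mod_cast card_le_card (filter_subset _ _)
  rw [hB, Set.ncard_coe_finset, div_mul_eq_mul_div, le_div_iff₀ hα]
  rcases (Nat.cast_nonneg n : (0 : ℝ) ≤ n).eq_or_lt with hn | hn
  · rw [← hn] at hBn ⊢
    simp [le_antisymm hBn (Nat.cast_nonneg _)]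
  · nlinarith

/-- Fact 2.19: in a `k`-uniform `(α, μ)`-constellation on `n` vertices, for every `(k-2)`-set
`x` there are at most `(2μ/α) n` vertices `z ∉ V(R_x)` whose degree in the link graph
`H(Ψ_x)` exceeds `(n-2)/3`. -/
theorem stmt10 {V : Type*} [Fintype V] [DecidableEq V] (k : ℕ) (hk : 2 ≤ k)
    (α μ : ℝ) (hα : 0 < α) (hμ : 0 < μ)
    (Ψ : Constellation V) (h : IsAMConst k Ψ α μ)
    (x : Finset V) (hx : x ⊆ Ψ.verts) (hxc : x.card = k - 2) :
    (({z : V | z ∈ Ψ.verts ∧ z ∉ Ψ.W x ∧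
        ((Ψ.verts.card : ℝ) - 2) / 3 <
          (((Ψ.link x).edges.filter fun p => z ∈ p).card : ℝ)} : Set V).ncard : ℝ) ≤
      2 * μ / α * (Ψ.verts.card : ℝ) :=
  stmt10_general k hk α μ hα Ψ h x hx hxc
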